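/- arXiv:2402.15846 — 6 statements merged into one kernel-verified Lean document; each statement's English description precedes it below -/
import Mathlib

section
/- Let E be a real inner product space with dim E = 3, let ξ ∈ E be a unit vector, and let ψ(U) = ⟨U, ξ⟩. Let R : E → E → E → E be a trilinear map whose Ricci tensor S(V,Y) = tr(U ↦ R(U,V)Y) is symmetric and satisfies S(U,ξ) = 0 for all U. Define R̂(U,V)Y = R(U,V)Y + ψ(Y)(ψ(V)U − ψ(U)V), its Ricci tensor Ŝ(V,Y) = tr(U ↦ R̂(U,V)Y), and the Ricci operator Q̂ by ⟨Q̂V, Y⟩ = Ŝ(V,Y) for all Y. Then Ŝ(U,ξ) = 2ψ(U) for all U ∈ E, and Q̂ξ = 2ξ. -/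
/-!
Contracting `R̂(U,V)Y = R(U,V)Y + ψ(Y)(ψ(V)U − ψ(U)V)` over `U` adds
`ψ(Y)(n ψ(V) − ψ(V)) = (n − 1) ψ(V) ψ(Y)` to the Ricci tensor, since `U ↦ ψ(U)V` is a rank-one
map of trace `ψ(V)`. With `n = 3`, `ψ(ξ) = 1` and `S(ξ, ·) = S(·, ξ) = 0` both claims follow.
-/

open RealInnerProductSpace

section

variable {E : Type*} [NormedAddCommGroup E] [InnerProductSpace ℝ E] [FiniteDimensional ℝ E]

lemma trace_smul_id_sub_smulRight_innerₗ (ξ V : E) :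
    LinearMap.trace ℝ E (⟪V, ξ⟫ • LinearMap.id - (innerₗ E ξ).smulRight V)
      = (Module.finrank ℝ E - 1) * ⟪V, ξ⟫ := by
  rw [map_sub, map_smul, LinearMap.trace_id, LinearMap.trace_smulRight, innerₗ_apply_apply,
    real_inner_comm, smul_eq_mul]
  ring

lemma trace_flip_flip_of_semiSymmetric (ξ : E) {R Rhat : E →ₗ[ℝ] E →ₗ[ℝ] E →ₗ[ℝ] E}
    (hRhat : ∀ U V Y : E, Rhat U V Y = R U V Y + ⟪Y, ξ⟫ • (⟪V, ξ⟫ • U - ⟪U, ξ⟫ • V))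
    (V Y : E) :
    LinearMap.trace ℝ E ((Rhat.flip V).flip Y)
      = LinearMap.trace ℝ E ((R.flip V).flip Y)
        + (Module.finrank ℝ E - 1) * (⟪V, ξ⟫ * ⟪Y, ξ⟫) := by
  have hmap : (Rhat.flip V).flip Y
      = (R.flip V).flip Y + ⟪Y, ξ⟫ • (⟪V, ξ⟫ • LinearMap.id - (innerₗ E ξ).smulRight V) := by
    ext U
    simp [hRhat, real_inner_comm]
  rw [hmap, map_add, map_smul, trace_smul_id_sub_smulRight_innerₗ, smul_eq_mul]
  ring

end

/-- For the semi-symmetric non-metric connection on a 3-dimensional space, the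
Ricci tensor satisfies `Ŝ(U,ξ) = 2ψ(U)` and the Ricci operator `Q̂ξ = 2ξ`. -/
theorem ssnmc_ricci_on_xi
    {E : Type*} [NormedAddCommGroup E] [InnerProductSpace ℝ E]
    [FiniteDimensional ℝ E] (hdim : Module.finrank ℝ E = 3)
    (ξ : E) (hξ : ‖ξ‖ = 1)
    (R Rhat : E →ₗ[ℝ] E →ₗ[ℝ] E →ₗ[ℝ] E)
    (S Shat : E → E → ℝ)
    (hS : ∀ V Y : E, S V Y = LinearMap.trace ℝ E ((R.flip V).flip Y))
    (hSsymm : ∀ U V : E, S U V = S V U)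
    (hSξ : ∀ U : E, S U ξ = 0)
    (hRhat : ∀ U V Y : E,
      Rhat U V Y = R U V Y + ⟪Y, ξ⟫ • (⟪V, ξ⟫ • U - ⟪U, ξ⟫ • V))
    (hShat : ∀ V Y : E, Shat V Y = LinearMap.trace ℝ E ((Rhat.flip V).flip Y))
    (Qhat : E →ₗ[ℝ] E)
    (hQhat : ∀ V Y : E, ⟪Qhat V, Y⟫ = Shat V Y) :
    (∀ U : E, Shat U ξ = 2 * ⟪U, ξ⟫) ∧ Qhat ξ = (2 : ℝ) • ξ := by
  have hξξ : ⟪ξ, ξ⟫ = 1 := by rw [real_inner_self_eq_norm_sq, hξ, one_pow]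
  have hShat_eq (V Y : E) : Shat V Y = S V Y + 2 * (⟪V, ξ⟫ * ⟪Y, ξ⟫) := by
    rw [hShat, hS, trace_flip_flip_of_semiSymmetric ξ hRhat, hdim]
    norm_num
  refine ⟨fun U => ?_, ext_inner_right ℝ fun Y => ?_⟩
  · rw [hShat_eq, hSξ, hξξ]
    ring
  · rw [hQhat, hShat_eq, hSsymm, hSξ, hξξ, real_inner_smul_left, real_inner_comm]
    ring
end

section
/- Let E be a real inner product space with dim E = 3, let ξ ∈ E be a unit vector, and let ψ(U) = ⟨U, ξ⟩. Let R : E → E → E → E be a trilinear map, S a symmetric bilinear form on E with S(U,ξ) = 0 for all U, Q the operator with ⟨QU,V⟩ = S(U,V), and r = tr Q, such that the 3-dimensional curvature decomposition R(U,V)Y = ⟨V,Y⟩QU − ⟨U,Y⟩QV + S(V,Y)U − S(U,Y)V − (r/2)(⟨V,Y⟩U − ⟨U,Y⟩V) holds, and R(U,ξ)ξ = 0 for all U. Then QU = (r/2)(U − ψ(U)ξ) for all U ∈ E; consequently the operator Q̂ = Q + 2ψ(·)ξ satisfies Q̂U = (r/2)U + (2 − r/2)ψ(U)ξ. -/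
open RealInnerProductSpace

/-- Explicit form of the Ricci operators: from the 3-dimensional curvature
decomposition and `R(U,ξ)ξ = 0` one gets `QU = (r/2)(U − ψ(U)ξ)`, and hence the
Ricci operator `Q̂ = Q + 2ψ(·)ξ` of the semi-symmetric non-metric connection
satisfies `Q̂U = (r/2)U + (2 − r/2)ψ(U)ξ`. -/
theorem ssnmc_ricci_operator_form
    {E : Type*} [NormedAddCommGroup E] [InnerProductSpace ℝ E]
    [FiniteDimensional ℝ E] (hdim : Module.finrank ℝ E = 3)
    (ξ : E) (hξ : ‖ξ‖ = 1)
    (R : E →ₗ[ℝ] E →ₗ[ℝ] E →ₗ[ℝ] E)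
    (S : E →ₗ[ℝ] E →ₗ[ℝ] ℝ)
    (hSsymm : ∀ U V : E, S U V = S V U)
    (hSξ : ∀ U : E, S U ξ = 0)
    (Q : E →ₗ[ℝ] E)
    (hQ : ∀ U V : E, ⟪Q U, V⟫ = S U V)
    (r : ℝ) (hr : r = LinearMap.trace ℝ E Q)
    (hR : ∀ U V Y : E,
      R U V Y = ⟪V, Y⟫ • Q U - ⟪U, Y⟫ • Q V + S V Y • U - S U Y • V
        - (r / 2) • (⟪V, Y⟫ • U - ⟪U, Y⟫ • V))
    (hRξ : ∀ U : E, R U ξ ξ = 0) :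
    (∀ U : E, Q U = (r / 2) • (U - ⟪U, ξ⟫ • ξ)) ∧
      (∀ U : E, Q U + (2 * ⟪U, ξ⟫) • ξ =
        (r / 2) • U + ((2 - r / 2) * ⟪U, ξ⟫) • ξ) := by
  have hξξ : ⟪ξ, ξ⟫ = (1 : ℝ) := by
    rw [real_inner_self_eq_norm_sq, hξ]; norm_num
  have hQξ : Q ξ = 0 := by
    have : ∀ V : E, ⟪Q ξ, V⟫ = (0 : ℝ) := fun V => by
      rw [hQ, hSsymm, hSξ]
    exact ext_inner_right ℝ (by simpa using this)
  have key : ∀ U : E, Q U = (r / 2) • (U - ⟪U, ξ⟫ • ξ) := by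
    intro U
    have h := hRξ U
    rw [hR U ξ ξ] at h
    rw [hξξ, hSξ, hSξ, hQξ] at h
    simp only [one_smul, smul_zero, zero_smul, sub_zero, add_zero] at h
    exact sub_eq_zero.mp h
  refine ⟨key, fun U => ?_⟩
  rw [key U]
  rw [smul_sub, smul_smul]
  module
end

section
/- Let E be a real inner product space with dim E = 3, let ξ ∈ E be a unit vector, and let ψ(U) = ⟨U, ξ⟩. Let R : E → E → E → E be a trilinear map and define R̂(U,V)Y = R(U,V)Y + ψ(Y)(ψ(V)U − ψ(U)V). With Ricci tensors S(V,Y) = tr(U ↦ R(U,V)Y) and Ŝ(V,Y) = tr(U ↦ R̂(U,V)Y), define the projective curvature tensors P(U,V)Y = R(U,V)Y − (1/2)(S(V,Y)U − S(U,Y)V) and P̂(U,V)Y = R̂(U,V)Y − (1/2)(Ŝ(V,Y)U − Ŝ(U,Y)V). Then P̂(U,V)Y = P(U,V)Y for all U, V, Y ∈ E. -/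
open RealInnerProductSpace

/-- The projective curvature tensors of the semi-symmetric non-metric
connection and of the Levi-Civita connection coincide on a 3-dimensional
space: `P̂(U,V)Y = P(U,V)Y`. -/
theorem ssnmc_projective_curvature_eq
    {E : Type*} [NormedAddCommGroup E] [InnerProductSpace ℝ E]
    [FiniteDimensional ℝ E] (hdim : Module.finrank ℝ E = 3)
    (ξ : E) (hξ : ‖ξ‖ = 1)
    (R Rhat : E →ₗ[ℝ] E →ₗ[ℝ] E →ₗ[ℝ] E)
    (hRhat : ∀ U V Y : E,
      Rhat U V Y = R U V Y + ⟪Y, ξ⟫ • (⟪V, ξ⟫ • U - ⟪U, ξ⟫ • V))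
    (S Shat : E → E → ℝ)
    (hS : ∀ V Y : E, S V Y = LinearMap.trace ℝ E ((R.flip V).flip Y))
    (hShat : ∀ V Y : E, Shat V Y = LinearMap.trace ℝ E ((Rhat.flip V).flip Y))
    (P Phat : E → E → E → E)
    (hP : ∀ U V Y : E,
      P U V Y = R U V Y - (1 / 2 : ℝ) • (S V Y • U - S U Y • V))
    (hPhat : ∀ U V Y : E,
      Phat U V Y = Rhat U V Y - (1 / 2 : ℝ) • (Shat V Y • U - Shat U Y • V)) :
    ∀ U V Y : E, Phat U V Y = P U V Y := by
  have hdecomp : ∀ V Y : E, (Rhat.flip V).flip Y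
      = (R.flip V).flip Y + (⟪Y, ξ⟫ * ⟪V, ξ⟫) • LinearMap.id
        - ⟪Y, ξ⟫ • dualTensorHom ℝ E E ((innerSL ℝ ξ).toLinearMap ⊗ₜ V) := by
    intro V Y
    ext U
    simp [hRhat, smul_sub, smul_smul, real_inner_comm ξ U]
    abel
  have hShat' : ∀ V Y : E, Shat V Y = S V Y + 2 * (⟪V, ξ⟫ * ⟪Y, ξ⟫) := by
    intro V Y
    rw [hShat, hS, hdecomp, map_sub, map_add, map_smul, map_smul,
      LinearMap.trace_id, hdim, LinearMap.trace_eq_contract_apply]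
    simp [real_inner_comm ξ V]
    ring
  intro U V Y
  rw [hPhat, hP, hRhat, hShat', hShat']
  module
end

section
/- Let E be a real inner product space with dim E = 3, let ξ ∈ E be a unit vector, and let ψ(U) = ⟨U, ξ⟩. Let R : E → E → E → E be a trilinear map and define R̂(U,V)Y = R(U,V)Y + ψ(Y)(ψ(V)U − ψ(U)V). Define Ricci tensors S, Ŝ as traces over the first argument, Ricci operators Q, Q̂ via ⟨QV,Y⟩ = S(V,Y), ⟨Q̂V,Y⟩ = Ŝ(V,Y), and scalar curvatures r = tr Q, r̂ = tr Q̂. Define the conformal curvature tensors C(U,V)Y = R(U,V)Y − [S(V,Y)U − S(U,Y)V + ⟨V,Y⟩QU − ⟨U,Y⟩QV] + (r/2)[⟨V,Y⟩U − ⟨U,Y⟩V] and Ĉ(U,V)Y = R̂(U,V)Y − [Ŝ(V,Y)U − Ŝ(U,Y)V + ⟨V,Y⟩Q̂U − ⟨U,Y⟩Q̂V] + (r̂/2)[⟨V,Y⟩U − ⟨U,Y⟩V]. Then Ĉ(U,V)ξ = C(U,V)ξ for all U, V ∈ E. -/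
open RealInnerProductSpace

lemma trace_smulRight' {E : Type*} [NormedAddCommGroup E] [InnerProductSpace ℝ E]
    [FiniteDimensional ℝ E] (f : E →ₗ[ℝ] ℝ) (v : E) :
    LinearMap.trace ℝ E (f.smulRight v) = f v := by
  have h1 : f.smulRight v = (LinearMap.toSpanSingleton ℝ E v).comp f := by
    ext; simp [LinearMap.toSpanSingleton_apply]
  rw [h1, LinearMap.trace_comp_comm']
  have h2 : f.comp (LinearMap.toSpanSingleton ℝ E v) = (f v) • LinearMap.id := by
    ext; simp [LinearMap.toSpanSingleton_apply]
  rw [h2, map_smul, LinearMap.trace_id]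
  simp

/-- The conformal curvature tensors of the semi-symmetric non-metric connection
and of the Levi-Civita connection agree when evaluated on `ξ`:
`Ĉ(U,V)ξ = C(U,V)ξ`. -/
theorem ssnmc_conformal_curvature_on_xi
    {E : Type*} [NormedAddCommGroup E] [InnerProductSpace ℝ E]
    [FiniteDimensional ℝ E] (hdim : Module.finrank ℝ E = 3)
    (ξ : E) (hξ : ‖ξ‖ = 1)
    (R Rhat : E →ₗ[ℝ] E →ₗ[ℝ] E →ₗ[ℝ] E)
    (hRhat : ∀ U V Y : E,
      Rhat U V Y = R U V Y + ⟪Y, ξ⟫ • (⟪V, ξ⟫ • U - ⟪U, ξ⟫ • V))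
    (S Shat : E → E → ℝ)
    (hS : ∀ V Y : E, S V Y = LinearMap.trace ℝ E ((R.flip V).flip Y))
    (hShat : ∀ V Y : E, Shat V Y = LinearMap.trace ℝ E ((Rhat.flip V).flip Y))
    (Q Qhat : E →ₗ[ℝ] E)
    (hQ : ∀ V Y : E, ⟪Q V, Y⟫ = S V Y)
    (hQhat : ∀ V Y : E, ⟪Qhat V, Y⟫ = Shat V Y)
    (r rhat : ℝ)
    (hr : r = LinearMap.trace ℝ E Q)
    (hrhat : rhat = LinearMap.trace ℝ E Qhat)
    (C Chat : E → E → E → E)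
    (hC : ∀ U V Y : E,
      C U V Y = R U V Y
        - (S V Y • U - S U Y • V + ⟪V, Y⟫ • Q U - ⟪U, Y⟫ • Q V)
        + (r / 2) • (⟪V, Y⟫ • U - ⟪U, Y⟫ • V))
    (hChat : ∀ U V Y : E,
      Chat U V Y = Rhat U V Y
        - (Shat V Y • U - Shat U Y • V + ⟪V, Y⟫ • Qhat U - ⟪U, Y⟫ • Qhat V)
        + (rhat / 2) • (⟪V, Y⟫ • U - ⟪U, Y⟫ • V)) :
    ∀ U V : E, Chat U V ξ = C U V ξ := by
  have hξξ : ⟪ξ, ξ⟫ = (1 : ℝ) := by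
    rw [real_inner_self_eq_norm_sq, hξ]; norm_num
  -- ψ as a linear functional
  set ψ : E →ₗ[ℝ] ℝ := (innerSL ℝ ξ).toLinearMap with hψ
  have hψa : ∀ U : E, ψ U = ⟪U, ξ⟫ := fun U => by simp [hψ, real_inner_comm]
  -- Ŝ = S + 2 ψ ⊗ ψ
  have hShat' : ∀ V Y : E, Shat V Y = S V Y + 2 * (⟪Y, ξ⟫ * ⟪V, ξ⟫) := by
    intro V Y
    have hmap : (Rhat.flip V).flip Y
        = (R.flip V).flip Y + (⟪Y, ξ⟫ * ⟪V, ξ⟫) • LinearMap.id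
          - ⟪Y, ξ⟫ • (ψ.smulRight V) := by
      ext U
      simp only [LinearMap.sub_apply, LinearMap.add_apply, LinearMap.smul_apply,
        LinearMap.flip_apply, LinearMap.id_apply, LinearMap.smulRight_apply, hψa]
      rw [hRhat]
      rw [smul_sub, smul_smul, smul_smul]
      abel
    rw [hShat, hmap, map_sub, map_add, map_smul, map_smul, LinearMap.trace_id,
      trace_smulRight', hdim, hψa, ← hS]
    simp only [smul_eq_mul]
    ring
  -- Q̂ V = Q V + 2 ⟪V,ξ⟫ • ξ
  have hQhat' : ∀ V : E, Qhat V = Q V + (2 * ⟪V, ξ⟫) • ξ := by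
    intro V
    apply ext_inner_right ℝ
    intro Y
    rw [hQhat, hShat', inner_add_left, hQ, real_inner_smul_left, real_inner_comm ξ Y]
    ring
  -- r̂ = r + 2
  have hrhat' : rhat = r + 2 := by
    have hQeq : Qhat = Q + (2 : ℝ) • (ψ.smulRight ξ) := by
      ext V
      simp only [LinearMap.add_apply, LinearMap.smul_apply, LinearMap.smulRight_apply, hψa]
      rw [hQhat', smul_smul]
    rw [hrhat, hQeq, map_add, map_smul, trace_smulRight', hψa, hξξ, ← hr]
    simp only [smul_eq_mul]
    ring
  intro U V
  rw [hC, hChat, hRhat, hQhat', hQhat', hShat', hShat', hrhat']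
  simp only [hξξ]
  rw [real_inner_comm ξ V, real_inner_comm ξ U]
  module
end

section
/- Let E be a real inner product space, let ξ ∈ E be a unit vector, and let ψ(U) = ⟨U, ξ⟩. Suppose w, ρ ∈ E and a ∈ ℝ satisfy: (i) −(1/2)⟨ρ,U⟩ = (a+1)⟨w,U⟩ − (a−1)ψ(U)⟨w,ξ⟩ for all U ∈ E; (ii) ⟨ρ,ξ⟩ = 0; (iii) ψ(V)⟨w,U⟩ = ψ(U)⟨w,V⟩ for all U, V ∈ E. Then w = 0. -/
open RealInnerProductSpace

/-- Algebraic core of the gradient Ricci soliton theorem: under the stated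
identities the gradient `w` of the potential function vanishes. -/
theorem gradient_ricci_soliton_core
    {E : Type*} [NormedAddCommGroup E] [InnerProductSpace ℝ E]
    (ξ : E) (hξ : ‖ξ‖ = 1)
    (w ρ : E) (a : ℝ)
    (h1 : ∀ U : E,
      -(1 / 2) * ⟪ρ, U⟫ = (a + 1) * ⟪w, U⟫ - (a - 1) * ⟪U, ξ⟫ * ⟪w, ξ⟫)
    (h2 : ⟪ρ, ξ⟫ = 0)
    (h3 : ∀ U V : E, ⟪V, ξ⟫ * ⟪w, U⟫ = ⟪U, ξ⟫ * ⟪w, V⟫) :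
    w = 0 := by
  have hξξ : ⟪ξ, ξ⟫ = 1 := by
    rw [real_inner_self_eq_norm_sq, hξ]; norm_num
  have hwξ : ⟪w, ξ⟫ = 0 := by
    have := h1 ξ
    rw [h2, hξξ] at this
    nlinarith
  have hww : ⟪w, w⟫ = 0 := by
    have := h3 w ξ
    rw [hξξ, hwξ] at this
    linarith
  exact inner_self_eq_zero.mp hww
end

section
/- Let E be a real inner product space, let ξ ∈ E be a unit vector, and let ψ(U) = ⟨U, ξ⟩. Suppose w, ρ ∈ E and a ∈ ℝ satisfy: (i) −2⟨ρ,U⟩ = (a+1)⟨w,U⟩ − (a−1)ψ(U)⟨w,ξ⟩ for all U ∈ E; (ii) ⟨ρ,ξ⟩ = 0; (iii) ψ(V)⟨w,U⟩ − ψ(U)⟨w,V⟩ = ψ(U)⟨ρ,V⟩ − ψ(V)⟨ρ,U⟩ for all U, V ∈ E. Then (a−1)·w = 0; in particular either a = 1 or w = 0. -/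
open RealInnerProductSpace

/-- Algebraic core of the gradient Yamabe soliton theorem: under the stated
identities `(a − 1)w = 0`, so either `a = 1` (constant scalar curvature) or
`w = 0` (the soliton is trivial). -/
theorem gradient_yamabe_soliton_core
    {E : Type*} [NormedAddCommGroup E] [InnerProductSpace ℝ E]
    (ξ : E) (hξ : ‖ξ‖ = 1)
    (w ρ : E) (a : ℝ)
    (h1 : ∀ U : E,
      -2 * ⟪ρ, U⟫ = (a + 1) * ⟪w, U⟫ - (a - 1) * ⟪U, ξ⟫ * ⟪w, ξ⟫)
    (h2 : ⟪ρ, ξ⟫ = 0)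
    (h3 : ∀ U V : E,
      ⟪V, ξ⟫ * ⟪w, U⟫ - ⟪U, ξ⟫ * ⟪w, V⟫ =
        ⟪U, ξ⟫ * ⟪ρ, V⟫ - ⟪V, ξ⟫ * ⟪ρ, U⟫) :
    (a - 1) • w = 0 ∧ (a = 1 ∨ w = 0) := by
  have hξξ : ⟪ξ, ξ⟫ = 1 := by
    rw [real_inner_self_eq_norm_sq, hξ]; norm_num
  have hwξ : ⟪w, ξ⟫ = 0 := by
    have := h1 ξ
    rw [h2, hξξ] at this
    linarith
  have key : ∀ U : E, (a - 1) * ⟪w, U⟫ = 0 := by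
    intro U
    have e1 := h1 U
    have e3 := h3 U ξ
    rw [hwξ] at e1 e3
    rw [h2, hξξ] at e3
    linarith
  have hz : (a - 1) • w = 0 := by
    have : ⟪(a - 1) • w, (a - 1) • w⟫ = 0 := by
      rw [real_inner_smul_left, real_inner_smul_right, key]
      ring
    exact inner_self_eq_zero.mp this
  refine ⟨hz, ?_⟩
  rcases eq_or_ne a 1 with h | h
  · exact Or.inl h
  · right
    have := smul_eq_zero.mp hz
    rcases this with h' | h'
    · exact absurd (by linarith [sub_eq_zero.mp h']) h
    · exact h'
end
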